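/- Let (D1, D, D2, i^*, i_*, i^!, j_!, j^*, j_*) be a recollement of triangulated categories and let T be a thick subcategory of D. Set T1 = i^* T and T2 = j^* T. If i_* T1 ⊆ T and j_* T2 ⊆ T, then there is an induced recollement of Verdier quotient categories (D1/T1, D/T, D2/T2). -/

import Mathlib

/-!
Each of the six functors carries the relevant one of `S₁, S, S₂` into another: `i^*` and `j^*` by
definition, `i_*` and `j_*` by hypothesis, and `j_!`, `i^!` because `S` is closed under shifts,
extensions and isomorphisms, applied to the triangles `j_!j^*X → X → i_*i^*X` and
`i_*i^!X → X → j_*j^*X` (together with `i^! ≅ i^*i_*i^!`). A triangulated functor preserving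
these subcategories preserves morphisms with cone in them, so all six functors descend to the
Verdier quotients and the four adjunctions descend with them. Invertible (co)units stay
invertible, which gives the three full embeddings, and `j^*i_* = 0` persists because
localization functors preserve zero objects.
-/

open CategoryTheory Limits Pretriangulated

universe u

/-- A recollement of triangulated categories (Beilinson–Bernstein–Deligne). -/
structure Recollement (T₁ T T₂ : Type*) [Category T₁] [Category T] [Category T₂]
    [HasShift T₁ ℤ] [HasShift T ℤ] [HasShift T₂ ℤ]
    [Preadditive T₁] [Preadditive T] [Preadditive T₂]
    [HasZeroObject T₁] [HasZeroObject T] [HasZeroObject T₂]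
    [∀ n : ℤ, (shiftFunctor T₁ n).Additive] [∀ n : ℤ, (shiftFunctor T n).Additive]
    [∀ n : ℤ, (shiftFunctor T₂ n).Additive]
    [Pretriangulated T₁] [Pretriangulated T] [Pretriangulated T₂] where
  iStar : T ⥤ T₁
  iLower : T₁ ⥤ T
  iShriek : T ⥤ T₁
  jShriek : T₂ ⥤ T
  jStar : T ⥤ T₂
  jLower : T₂ ⥤ T
  iStarCS : iStar.CommShift ℤ
  iLowerCS : iLower.CommShift ℤ
  iShriekCS : iShriek.CommShift ℤ
  jShriekCS : jShriek.CommShift ℤ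
  jStarCS : jStar.CommShift ℤ
  jLowerCS : jLower.CommShift ℤ
  iStarTr : letI := iStarCS; iStar.IsTriangulated
  iLowerTr : letI := iLowerCS; iLower.IsTriangulated
  iShriekTr : letI := iShriekCS; iShriek.IsTriangulated
  jShriekTr : letI := jShriekCS; jShriek.IsTriangulated
  jStarTr : letI := jStarCS; jStar.IsTriangulated
  jLowerTr : letI := jLowerCS; jLower.IsTriangulated
  adj₁ : iStar ⊣ iLower
  adj₂ : iLower ⊣ iShriek
  adj₃ : jShriek ⊣ jStar
  adj₄ : jStar ⊣ jLower
  iLowerFF : iLower.FullyFaithful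
  jShriekFF : jShriek.FullyFaithful
  jLowerFF : jLower.FullyFaithful
  jStar_iLower_zero : ∀ X : T₁, IsZero (jStar.obj (iLower.obj X))
  tri₁ : ∀ X : T, ∃ h : iLower.obj (iStar.obj X) ⟶ (jShriek.obj (jStar.obj X))⟦(1 : ℤ)⟧,
    Triangle.mk (adj₃.counit.app X) (adj₁.unit.app X) h ∈ distTriang T
  tri₂ : ∀ X : T, ∃ h : jLower.obj (jStar.obj X) ⟶ (iLower.obj (iShriek.obj X))⟦(1 : ℤ)⟧,
    Triangle.mk (adj₂.counit.app X) (adj₄.unit.app X) h ∈ distTriang T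

/-- A recollement of (plain) categories: six functors, four adjunctions, three full
embeddings, and `j^* ∘ i_* = 0`. -/
structure CatRecollement (T₁ T T₂ : Type*) [Category T₁] [Category T] [Category T₂] where
  iStar : T ⥤ T₁
  iLower : T₁ ⥤ T
  iShriek : T ⥤ T₁
  jShriek : T₂ ⥤ T
  jStar : T ⥤ T₂
  jLower : T₂ ⥤ T
  adj₁ : iStar ⊣ iLower
  adj₂ : iLower ⊣ iShriek
  adj₃ : jShriek ⊣ jStar
  adj₄ : jStar ⊣ jLower
  iLowerFF : iLower.FullyFaithful
  jShriekFF : jShriek.FullyFaithful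
  jLowerFF : jLower.FullyFaithful
  jStar_iLower_zero : ∀ X : T₁, IsZero (jStar.obj (iLower.obj X))

/-- The class of morphisms whose cone lies in `S`; localizing at it gives the Verdier
quotient by the thick subcategory `S`. -/
def coneW {D : Type*} [Category D] [HasShift D ℤ] [Preadditive D] [HasZeroObject D]
    [∀ n : ℤ, (shiftFunctor D n).Additive] [Pretriangulated D] (S : Set D) :
    MorphismProperty D :=
  fun X Y f => ∃ (Z : D) (g : Y ⟶ Z) (h : Z ⟶ X⟦(1 : ℤ)⟧),
    (Triangle.mk f g h ∈ distTriang D) ∧ Z ∈ S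

namespace CategoryTheory.Localization

variable {C D : Type*} [Category C] [Category D]

/-- The maps `L.map (hZ.from X)` form a natural transformation `L ⟶ L ⋙ const (L.obj Z)`; its
lift `𝟭 D ⟶ const (L.obj Z)` is the identity at `L.obj Z`, so its naturality forces every
morphism into `L.obj Z` to be one of its components. -/
noncomputable def isTerminalObj (L : C ⥤ D) (W : MorphismProperty C) [L.IsLocalization W]
    {Z : C} (hZ : IsTerminal Z) : IsTerminal (L.obj Z) := by
  let τ : L ⟶ L ⋙ (Functor.const D).obj (L.obj Z) :=
    { app X := L.map (hZ.from X)
      naturality X Y f := by simp [← L.map_comp] }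
  let τ' := liftNatTrans L W L _ (𝟭 D) ((Functor.const D).obj (L.obj Z)) τ
  have hτ' : τ'.app (L.obj Z) = 𝟙 _ := by simp [τ', τ, liftNatTrans_app]
  exact IsTerminal.ofUniqueHom τ'.app fun Y φ => by simpa [hτ'] using τ'.naturality φ

lemma isZero_obj (L : C ⥤ D) (W : MorphismProperty C) [L.IsLocalization W]
    {Z : C} (hZ : IsZero Z) : IsZero (L.obj Z) := by
  have hI : IsInitial (L.obj Z) := (isTerminalObj L.op W.op hZ.op.isTerminal).unop
  have hT : IsTerminal (L.obj Z) := isTerminalObj L W hZ.isTerminal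
  exact ⟨fun Y => ⟨⟨⟨hI.to Y⟩, fun _ => hI.hom_ext _ _⟩⟩,
    fun Y => ⟨⟨⟨hT.from Y⟩, fun _ => hT.hom_ext _ _⟩⟩⟩

lemma isIso_of_isIso_app_obj (L : C ⥤ D) (W : MorphismProperty C) [L.IsLocalization W]
    {E : Type*} [Category E] {F G : D ⥤ E} (τ : F ⟶ G) (hτ : ∀ X, IsIso (τ.app (L.obj X))) :
    IsIso τ := by
  have : ∀ X, IsIso ((((Functor.whiskeringLeft C D E).obj L).map τ).app X) := hτ
  have : IsIso (((Functor.whiskeringLeft C D E).obj L).map τ) := NatIso.isIso_of_isIso_app _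
  exact (fullyFaithfulWhiskeringLeft L W E).isIso_of_isIso_map τ

end CategoryTheory.Localization

namespace CategoryTheory.Adjunction

variable {C₁ C₂ D₁ D₂ : Type*} [Category C₁] [Category C₂] [Category D₁] [Category D₂]
  {G : C₁ ⥤ C₂} {F : C₂ ⥤ C₁} (adj : G ⊣ F)
  (L₁ : C₁ ⥤ D₁) (W₁ : MorphismProperty C₁) [L₁.IsLocalization W₁]
  (L₂ : C₂ ⥤ D₂) (W₂ : MorphismProperty C₂) [L₂.IsLocalization W₂]
  (G' : D₁ ⥤ D₂) (F' : D₂ ⥤ D₁) [CatCommSq G L₁ L₂ G'] [CatCommSq F L₂ L₁ F']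

instance isIso_localization_unit [IsIso adj.unit] :
    IsIso (adj.localization L₁ W₁ L₂ W₂ G' F').unit :=
  Localization.isIso_of_isIso_app_obj L₁ W₁ _ fun X => by
    rw [localization_unit_app]
    infer_instance

instance isIso_localization_counit [IsIso adj.counit] :
    IsIso (adj.localization L₁ W₁ L₂ W₂ G' F').counit :=
  Localization.isIso_of_isIso_app_obj L₂ W₂ _ fun X => by
    rw [localization_counit_app]
    infer_instance

end CategoryTheory.Adjunction

section

variable {C C' : Type*} [Category C] [Category C'] [HasShift C ℤ] [HasShift C' ℤ]
  [Preadditive C] [Preadditive C'] [HasZeroObject C] [HasZeroObject C']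
  [∀ n : ℤ, (shiftFunctor C n).Additive] [∀ n : ℤ, (shiftFunctor C' n).Additive]
  [Pretriangulated C] [Pretriangulated C']
  (F : C ⥤ C') [F.CommShift ℤ] [F.IsTriangulated] {S : Set C} {S' : Set C'}

lemma obj₁_mem_of_distTriang (hshift : ∀ (X : C) (n : ℤ), X ∈ S → X⟦n⟧ ∈ S)
    (hext : ∀ T : Triangle C, T ∈ distTriang C → T.obj₁ ∈ S → T.obj₃ ∈ S → T.obj₂ ∈ S)
    {T : Triangle C} (hT : T ∈ distTriang C) (h₂ : T.obj₂ ∈ S) (h₃ : T.obj₃ ∈ S) :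
    T.obj₁ ∈ S :=
  hext _ (inv_rot_of_distTriang _ hT) (hshift _ (-1) h₃) h₂

lemma coneW_le_inverseImage (hF : ∀ X ∈ S, F.obj X ∈ S') :
    coneW S ≤ (coneW S').inverseImage F := by
  rintro X Y f ⟨Z, g, h, hT, hZ⟩
  exact ⟨F.obj Z, F.map g, F.map h ≫ (F.commShiftIso (1 : ℤ)).hom.app X,
    F.map_distinguished _ hT, hF Z hZ⟩

noncomputable def verdierQuotientMap (hF : ∀ X ∈ S, F.obj X ∈ S') :
    (coneW S).Localization ⥤ (coneW S').Localization :=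
  Localization.Construction.lift (F ⋙ (coneW S').Q) fun _ _ f hf =>
    (coneW S').Q_inverts _ (coneW_le_inverseImage F hF f hf)

lemma Q_comp_verdierQuotientMap (hF : ∀ X ∈ S, F.obj X ∈ S') :
    (coneW S).Q ⋙ verdierQuotientMap F hF = F ⋙ (coneW S').Q :=
  Localization.Construction.fac _ _

noncomputable instance (hF : ∀ X ∈ S, F.obj X ∈ S') :
    CatCommSq F (coneW S).Q (coneW S').Q (verdierQuotientMap F hF) :=
  ⟨eqToIso (Q_comp_verdierQuotientMap F hF).symm⟩

end

def CategoryTheory.Functor.essImageSet {C C' : Type*} [Category C] [Category C']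
    (F : C ⥤ C') (S : Set C) : Set C' :=
  {Z | ∃ X ∈ S, Nonempty (Z ≅ F.obj X)}

namespace Recollement

variable {D₁ D D₂ : Type*} [Category D₁] [Category D] [Category D₂]
  [HasShift D₁ ℤ] [HasShift D ℤ] [HasShift D₂ ℤ]
  [Preadditive D₁] [Preadditive D] [Preadditive D₂]
  [HasZeroObject D₁] [HasZeroObject D] [HasZeroObject D₂]
  [∀ n : ℤ, (shiftFunctor D₁ n).Additive] [∀ n : ℤ, (shiftFunctor D n).Additive]
  [∀ n : ℤ, (shiftFunctor D₂ n).Additive]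
  [Pretriangulated D₁] [Pretriangulated D] [Pretriangulated D₂]
  (R : Recollement D₁ D D₂)

instance : R.iStar.CommShift ℤ := R.iStarCS
instance : R.iLower.CommShift ℤ := R.iLowerCS
instance : R.iShriek.CommShift ℤ := R.iShriekCS
instance : R.jShriek.CommShift ℤ := R.jShriekCS
instance : R.jStar.CommShift ℤ := R.jStarCS
instance : R.jLower.CommShift ℤ := R.jLowerCS

instance : R.iStar.IsTriangulated := R.iStarTr
instance : R.iLower.IsTriangulated := R.iLowerTr
instance : R.iShriek.IsTriangulated := R.iShriekTr
instance : R.jShriek.IsTriangulated := R.jShriekTr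
instance : R.jStar.IsTriangulated := R.jStarTr
instance : R.jLower.IsTriangulated := R.jLowerTr

instance : R.iLower.Full := R.iLowerFF.full
instance : R.iLower.Faithful := R.iLowerFF.faithful
instance : R.jShriek.Full := R.jShriekFF.full
instance : R.jShriek.Faithful := R.jShriekFF.faithful
instance : R.jLower.Full := R.jLowerFF.full
instance : R.jLower.Faithful := R.jLowerFF.faithful

structure IsCompatible (S₁ : Set D₁) (S : Set D) (S₂ : Set D₂) : Prop where
  iStar : ∀ X ∈ S, R.iStar.obj X ∈ S₁
  iLower : ∀ X ∈ S₁, R.iLower.obj X ∈ S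
  iShriek : ∀ X ∈ S, R.iShriek.obj X ∈ S₁
  jShriek : ∀ X ∈ S₂, R.jShriek.obj X ∈ S
  jStar : ∀ X ∈ S, R.jStar.obj X ∈ S₂
  jLower : ∀ X ∈ S₂, R.jLower.obj X ∈ S

namespace IsCompatible

variable {R} {S₁ : Set D₁} {S : Set D} {S₂ : Set D₂}

lemma isZero_jStar_iLower (h : R.IsCompatible S₁ S S₂) (X : (coneW S₁).Localization) :
    IsZero ((verdierQuotientMap R.jStar h.jStar).obj
      ((verdierQuotientMap R.iLower h.iLower).obj X)) := by
  obtain ⟨X, rfl⟩ := (Localization.Construction.objEquiv _).surjective X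
  -- `Localization.Construction.lift` computes definitionally on objects `W.Q.obj X`
  exact Localization.isZero_obj (coneW S₂).Q (coneW S₂) (R.jStar_iLower_zero X)

noncomputable def catRecollement (h : R.IsCompatible S₁ S S₂) :
    CatRecollement (coneW S₁).Localization (coneW S).Localization (coneW S₂).Localization :=
  let adj₁ := R.adj₁.localization (coneW S).Q (coneW S) (coneW S₁).Q (coneW S₁)
    (verdierQuotientMap R.iStar h.iStar) (verdierQuotientMap R.iLower h.iLower)
  let adj₂ := R.adj₂.localization (coneW S₁).Q (coneW S₁) (coneW S).Q (coneW S)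
    (verdierQuotientMap R.iLower h.iLower) (verdierQuotientMap R.iShriek h.iShriek)
  let adj₃ := R.adj₃.localization (coneW S₂).Q (coneW S₂) (coneW S).Q (coneW S)
    (verdierQuotientMap R.jShriek h.jShriek) (verdierQuotientMap R.jStar h.jStar)
  let adj₄ := R.adj₄.localization (coneW S).Q (coneW S) (coneW S₂).Q (coneW S₂)
    (verdierQuotientMap R.jStar h.jStar) (verdierQuotientMap R.jLower h.jLower)
  { iStar := verdierQuotientMap R.iStar h.iStar
    iLower := verdierQuotientMap R.iLower h.iLower
    iShriek := verdierQuotientMap R.iShriek h.iShriek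
    jShriek := verdierQuotientMap R.jShriek h.jShriek
    jStar := verdierQuotientMap R.jStar h.jStar
    jLower := verdierQuotientMap R.jLower h.jLower
    adj₁ := adj₁
    adj₂ := adj₂
    adj₃ := adj₃
    adj₄ := adj₄
    iLowerFF := adj₁.fullyFaithfulROfIsIsoCounit
    jShriekFF := adj₃.fullyFaithfulLOfIsIsoUnit
    jLowerFF := adj₄.fullyFaithfulROfIsIsoCounit
    jStar_iLower_zero := h.isZero_jStar_iLower }

theorem exists_catRecollement (h : R.IsCompatible S₁ S S₂) :
    ∃ R' : CatRecollement (coneW S₁).Localization (coneW S).Localization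
        (coneW S₂).Localization,
      Nonempty ((coneW S).Q ⋙ R'.iStar ≅ R.iStar ⋙ (coneW S₁).Q) ∧
      Nonempty ((coneW S₁).Q ⋙ R'.iLower ≅ R.iLower ⋙ (coneW S).Q) ∧
      Nonempty ((coneW S).Q ⋙ R'.iShriek ≅ R.iShriek ⋙ (coneW S₁).Q) ∧
      Nonempty ((coneW S₂).Q ⋙ R'.jShriek ≅ R.jShriek ⋙ (coneW S).Q) ∧
      Nonempty ((coneW S).Q ⋙ R'.jStar ≅ R.jStar ⋙ (coneW S₂).Q) ∧
      Nonempty ((coneW S₂).Q ⋙ R'.jLower ≅ R.jLower ⋙ (coneW S).Q) :=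
  ⟨h.catRecollement,
    ⟨eqToIso (Q_comp_verdierQuotientMap _ h.iStar)⟩,
    ⟨eqToIso (Q_comp_verdierQuotientMap _ h.iLower)⟩,
    ⟨eqToIso (Q_comp_verdierQuotientMap _ h.iShriek)⟩,
    ⟨eqToIso (Q_comp_verdierQuotientMap _ h.jShriek)⟩,
    ⟨eqToIso (Q_comp_verdierQuotientMap _ h.jStar)⟩,
    ⟨eqToIso (Q_comp_verdierQuotientMap _ h.jLower)⟩⟩

end IsCompatible

variable {S : Set D}

lemma jShriek_obj_jStar_obj_mem (hshift : ∀ (X : D) (n : ℤ), X ∈ S → X⟦n⟧ ∈ S)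
    (hext : ∀ T : Triangle D, T ∈ distTriang D → T.obj₁ ∈ S → T.obj₃ ∈ S → T.obj₂ ∈ S)
    {X : D} (hX : X ∈ S) (hi : R.iLower.obj (R.iStar.obj X) ∈ S) :
    R.jShriek.obj (R.jStar.obj X) ∈ S :=
  obj₁_mem_of_distTriang hshift hext (R.tri₁ X).choose_spec hX hi

lemma iLower_obj_iShriek_obj_mem (hshift : ∀ (X : D) (n : ℤ), X ∈ S → X⟦n⟧ ∈ S)
    (hext : ∀ T : Triangle D, T ∈ distTriang D → T.obj₁ ∈ S → T.obj₃ ∈ S → T.obj₂ ∈ S)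
    {X : D} (hX : X ∈ S) (hj : R.jLower.obj (R.jStar.obj X) ∈ S) :
    R.iLower.obj (R.iShriek.obj X) ∈ S :=
  obj₁_mem_of_distTriang hshift hext (R.tri₂ X).choose_spec hX hj

theorem isCompatible_essImageSet (hiso : ∀ X Y : D, (X ≅ Y) → X ∈ S → Y ∈ S)
    (hshift : ∀ (X : D) (n : ℤ), X ∈ S → X⟦n⟧ ∈ S)
    (hext : ∀ T : Triangle D, T ∈ distTriang D → T.obj₁ ∈ S → T.obj₃ ∈ S → T.obj₂ ∈ S)
    (hi : ∀ Z ∈ R.iStar.essImageSet S, R.iLower.obj Z ∈ S)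
    (hj : ∀ Z ∈ R.jStar.essImageSet S, R.jLower.obj Z ∈ S) :
    R.IsCompatible (R.iStar.essImageSet S) S (R.jStar.essImageSet S) where
  iStar X hX := ⟨X, hX, ⟨Iso.refl _⟩⟩
  iLower := hi
  iShriek X hX :=
    ⟨_, R.iLower_obj_iShriek_obj_mem hshift hext hX (hj _ ⟨X, hX, ⟨Iso.refl _⟩⟩),
      ⟨(asIso (R.adj₁.counit.app _)).symm⟩⟩
  jShriek := by
    rintro Z ⟨X, hX, ⟨e⟩⟩
    exact hiso _ _ (R.jShriek.mapIso e.symm)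
      (R.jShriek_obj_jStar_obj_mem hshift hext hX (hi _ ⟨X, hX, ⟨Iso.refl _⟩⟩))
  jStar X hX := ⟨X, hX, ⟨Iso.refl _⟩⟩
  jLower := hj

end Recollement

/-- Proposition: a recollement of triangulated categories induces a recollement of the
Verdier quotients by a thick subcategory `S ⊆ D` and its images `S₁ = i^*S`, `S₂ = j^*S`,
provided `i_*S₁ ⊆ S` and `j_*S₂ ⊆ S`.  The induced functors commute with the quotient
functors. -/
theorem recollement_of_verdier_quotients
    (D₁ D D₂ : Type*) [Category D₁] [Category D] [Category D₂]
    [HasShift D₁ ℤ] [HasShift D ℤ] [HasShift D₂ ℤ]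
    [Preadditive D₁] [Preadditive D] [Preadditive D₂]
    [HasZeroObject D₁] [HasZeroObject D] [HasZeroObject D₂]
    [∀ n : ℤ, (shiftFunctor D₁ n).Additive] [∀ n : ℤ, (shiftFunctor D n).Additive]
    [∀ n : ℤ, (shiftFunctor D₂ n).Additive]
    [Pretriangulated D₁] [Pretriangulated D] [Pretriangulated D₂]
    (R : Recollement D₁ D D₂) (S : Set D)
    -- `S` is a thick (triangulated, closed under direct summands) subcategory:
    (hzero : ∀ Z : D, IsZero Z → Z ∈ S)
    (hiso : ∀ X Y : D, (X ≅ Y) → X ∈ S → Y ∈ S)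
    (hshift : ∀ (X : D) (n : ℤ), X ∈ S → X⟦n⟧ ∈ S)
    (hext : ∀ T : Triangle D, (T ∈ distTriang D) → T.obj₁ ∈ S → T.obj₃ ∈ S → T.obj₂ ∈ S)
    (hsummand : ∀ (X Y : D) (ι : X ⟶ Y) (r : Y ⟶ X), ι ≫ r = 𝟙 X → Y ∈ S → X ∈ S) :
    -- the images `S₁ = i^* S` and `S₂ = j^* S`:
    ∀ (S₁ : Set D₁) (S₂ : Set D₂),
      S₁ = {Z : D₁ | ∃ X ∈ S, Nonempty (Z ≅ R.iStar.obj X)} →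
      S₂ = {Z : D₂ | ∃ X ∈ S, Nonempty (Z ≅ R.jStar.obj X)} →
      (∀ Z ∈ S₁, R.iLower.obj Z ∈ S) →
      (∀ Z ∈ S₂, R.jLower.obj Z ∈ S) →
      ∃ R' : CatRecollement (coneW S₁).Localization (coneW S).Localization
          (coneW S₂).Localization,
        Nonempty ((coneW S).Q ⋙ R'.iStar ≅ R.iStar ⋙ (coneW S₁).Q) ∧
        Nonempty ((coneW S₁).Q ⋙ R'.iLower ≅ R.iLower ⋙ (coneW S).Q) ∧
        Nonempty ((coneW S).Q ⋙ R'.iShriek ≅ R.iShriek ⋙ (coneW S₁).Q) ∧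
        Nonempty ((coneW S₂).Q ⋙ R'.jShriek ≅ R.jShriek ⋙ (coneW S).Q) ∧
        Nonempty ((coneW S).Q ⋙ R'.jStar ≅ R.jStar ⋙ (coneW S₂).Q) ∧
        Nonempty ((coneW S₂).Q ⋙ R'.jLower ≅ R.jLower ⋙ (coneW S).Q) := by
  rintro S₁ S₂ rfl rfl hi hj
  exact (R.isCompatible_essImageSet hiso hshift hext hi hj).exists_catRecollement
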